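/- arXiv:2008.03955 — 3 statements merged into one kernel-verified Lean document; each statement's English description precedes it below -/
import Mathlib

section
/- If Γ satisfies the Riccati equations Γ_x = 2iλΓ - ū - uΓ² and Γ_t = -2λū + iū_x + 2(2iλ² - i|u|²)Γ - (2λu + iu_x)Γ², and u satisfies iu_t + u_xx + 2u|u|² = 0, then the conservation law ∂_t(uΓ) = ∂_x(i|u|² + (2λu + iu_x)Γ) holds. -/
/-!
Both sides are computed by the product rule. After substituting the two Riccati equations for
`Γ_x` and `Γ_t`, their difference is `-iΓ · (iu_t + u_xx + 2u|u|²)`, which vanishes by NLS.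
The resulting algebraic identity never uses that `ū` is the conjugate of `u`, so it is stated
for an arbitrary second potential `r` in place of `ū`.
-/

open Complex ComplexConjugate

theorem riccati_conservation_identity (lam u ut ux uxx r rx Γ Γx Γt : ℂ)
    (hricx : Γx = 2 * I * lam * Γ - r - u * Γ ^ 2)
    (hrict : Γt = -2 * lam * r + I * rx + 2 * (2 * I * lam ^ 2 - I * (u * r)) * Γ
      - (2 * lam * u + I * ux) * Γ ^ 2)
    (hNLS : I * ut + uxx + 2 * u * (u * r) = 0) :
    ut * Γ + u * Γt
      = I * (ux * r + u * rx) + ((2 * lam * ux + I * uxx) * Γ + (2 * lam * u + I * ux) * Γx) := by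
  rw [hricx, hrict]
  linear_combination (-I * Γ) * hNLS + (ut * Γ - 2 * lam * ux * Γ) * I_sq

theorem hasDerivAt_nls_flux {lam : ℂ} {u ux Γ : ℝ → ℂ} {u' ux' Γ' : ℂ} {x : ℝ}
    (hu : HasDerivAt u u' x) (hux : HasDerivAt ux ux' x) (hΓ : HasDerivAt Γ Γ' x) :
    HasDerivAt (fun y => I * (u y * conj (u y)) + (2 * lam * u y + I * ux y) * Γ y)
      (I * (u' * conj (u x) + u x * conj u')
        + ((2 * lam * u' + I * ux') * Γ x + (2 * lam * u x + I * ux x) * Γ')) x :=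
  ((hu.mul hu.star).const_mul I).add
    (((hu.const_mul (2 * lam)).add (hux.const_mul I)).mul hΓ)

/-- if `Γ` satisfies both Riccati equations of the NLS Lax pair and `u`
satisfies NLS, then the conservation law `∂_t(uΓ) = ∂_x(i|u|² + (2λu + iu_x)Γ)` holds. -/
theorem stmt_2 (lam : ℂ) (u ut ux uxx Γ Γx Γt : ℝ → ℝ → ℂ)
    (hut : ∀ x t, HasDerivAt (fun s => u x s) (ut x t) t)
    (hux : ∀ x t, HasDerivAt (fun y => u y t) (ux x t) x)
    (huxx : ∀ x t, HasDerivAt (fun y => ux y t) (uxx x t) x)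
    (hΓx : ∀ x t, HasDerivAt (fun y => Γ y t) (Γx x t) x)
    (hΓt : ∀ x t, HasDerivAt (fun s => Γ x s) (Γt x t) t)
    -- the x-part Riccati equation
    (hricx : ∀ x t, Γx x t = 2 * Complex.I * lam * Γ x t - (starRingEnd ℂ) (u x t)
      - u x t * (Γ x t) ^ 2)
    -- the t-part Riccati equation
    (hrict : ∀ x t, Γt x t = -2 * lam * (starRingEnd ℂ) (u x t)
      + Complex.I * (starRingEnd ℂ) (ux x t)
      + 2 * (2 * Complex.I * lam ^ 2 - Complex.I * (u x t * (starRingEnd ℂ) (u x t))) * Γ x t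
      - (2 * lam * u x t + Complex.I * ux x t) * (Γ x t) ^ 2)
    -- the NLS equation
    (hNLS : ∀ x t, Complex.I * ut x t + uxx x t
      + 2 * u x t * (u x t * (starRingEnd ℂ) (u x t)) = 0) :
    ∀ x t,
      deriv (fun s => u x s * Γ x s) t
        = deriv (fun y => Complex.I * (u y t * (starRingEnd ℂ) (u y t))
            + (2 * lam * u y t + Complex.I * ux y t) * Γ y t) x := by
  intro x t
  calc deriv (fun s => u x s * Γ x s) t = ut x t * Γ x t + u x t * Γt x t :=
        ((hut x t).mul (hΓt x t)).deriv
    _ = _ := riccati_conservation_identity lam _ _ _ _ _ _ _ _ _ (hricx x t) (hrict x t) (hNLS x t)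
    _ = _ := ((hasDerivAt_nls_flux (hux x t) (huxx x t) (hΓx x t)).deriv).symm
end

section
/- Suppose the Bäcklund matrix B(x,t,λ) = (λ - a)I + (1/2)[[-iΩ, i(ũ - u)], [i(conj(ũ) - conj(u)), iΩ]] with Ω = √(4b² - |u - ũ|²) satisfies the x-part gauge equation B_x = UB - BŨ, where U, Ũ are the NLS spatial Lax matrices of u and ũ respectively. Then the fields satisfy u_x - ũ_x = -2ia(u - ũ) - (u + ũ)Ω. -/
open Complex Matrix

/-- The spatial Lax matrix `U` of the NLS equation. -/
def laxU (u lam : ℂ) : Matrix (Fin 2) (Fin 2) ℂ :=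
  !![-Complex.I * lam, u; -(starRingEnd ℂ) u, Complex.I * lam]

/-- The Bäcklund matrix `B = (λ - a) I + (1/2)[[-iΩ, i(ũ-u)], [i conj(ũ-u), iΩ]]`. -/
noncomputable def backlundB (a : ℝ) (u v Ω lam : ℂ) : Matrix (Fin 2) (Fin 2) ℂ :=
  (lam - (a : ℂ)) • (1 : Matrix (Fin 2) (Fin 2) ℂ)
    + (1 / 2 : ℂ) • !![-Complex.I * Ω, Complex.I * (v - u);
        Complex.I * (starRingEnd ℂ) (v - u), Complex.I * Ω]

/-- if the Bäcklund matrix `B` with `Ω = √(4b² - |u - ũ|²)` satisfies the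
`x`-part gauge equation `B_x = U B - B Ũ` for all `λ`, then
`u_x - ũ_x = -2ia(u - ũ) - (u + ũ)Ω`. -/
theorem stmt_4 (a b : ℝ) (u v ux vx : ℝ → ℝ → ℂ) (Ωx : ℝ → ℝ → ℝ)
    (hbound : ∀ x t, Complex.normSq (u x t - v x t) ≤ 4 * b ^ 2)
    (hux : ∀ x t, HasDerivAt (fun y => u y t) (ux x t) x)
    (hvx : ∀ x t, HasDerivAt (fun y => v y t) (vx x t) x)
    (hΩx : ∀ x t, HasDerivAt
      (fun y => Real.sqrt (4 * b ^ 2 - Complex.normSq (u y t - v y t))) (Ωx x t) x)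
    -- the x-part gauge equation B_x = U B - B Ũ, for all λ
    (hgauge : ∀ (lam : ℂ) (x t : ℝ),
      (!![-(Complex.I / 2) * (Ωx x t : ℂ), (Complex.I / 2) * (vx x t - ux x t);
          (Complex.I / 2) * (starRingEnd ℂ) (vx x t - ux x t),
          (Complex.I / 2) * (Ωx x t : ℂ)] : Matrix (Fin 2) (Fin 2) ℂ)
        = laxU (u x t) lam
            * backlundB a (u x t) (v x t)
                ((Real.sqrt (4 * b ^ 2 - Complex.normSq (u x t - v x t)) : ℝ) : ℂ) lam
          - backlundB a (u x t) (v x t)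
                ((Real.sqrt (4 * b ^ 2 - Complex.normSq (u x t - v x t)) : ℝ) : ℂ) lam
            * laxU (v x t) lam) :
    ∀ x t, ux x t - vx x t
      = -2 * Complex.I * (a : ℂ) * (u x t - v x t)
        - (u x t + v x t)
          * ((Real.sqrt (4 * b ^ 2 - Complex.normSq (u x t - v x t)) : ℝ) : ℂ) := by
  intro x t
  have h := congr_fun (congr_fun (hgauge 0 x t) 0) 1
  simp [laxU, backlundB, Matrix.mul_apply, Fin.sum_univ_two, Matrix.one_apply, Matrix.vecMul, dotProduct, Matrix.add_apply, Matrix.smul_apply, Matrix.neg_apply] at h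
  linear_combination 2 * Complex.I * h + ((ux x t - vx x t) + (u x t + v x t) * ((Real.sqrt (4 * b ^ 2 - Complex.normSq (u x t - v x t)) : ℝ) : ℂ)) * Complex.I_sq
end

section
/- If u and ũ are connected by the Bäcklund relations u_x - ũ_x = -2ia(u - ũ) - (u + ũ)Ω and u_t - ũ_t = 2a(u_x - ũ_x) - iΩ(ũ_x + u_x) + i(u - ũ)(|u|² + |ũ|²) where Ω = √(4b² - |u - ũ|²), and ũ satisfies the Dirichlet conditions ũ(0,t) = 0 and ũ_t(0,t) = 0 for all t, then u satisfies the time-dependent boundary condition iu_t - 2u_x√(4b² - |u|²) - 4(a² + b²)u + 2u|u|² = 0 at x = 0 (up to a sign convention in u_t), i.e., eliminating ũ_x from the frozen Bäcklund relations at x = 0 yields this boundary condition. -/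
open Complex

/-- if `u` and `ũ` are connected by the Bäcklund relations frozen at `x = 0`
and `ũ` satisfies the Dirichlet conditions `ũ(0,t) = 0`, `ũ_t(0,t) = 0`, then `u`
satisfies the time-dependent boundary condition
`iu_t - 2u_x√(4b² - |u|²) - 4(a² + b²)u + 2u|u|² = 0` at `x = 0`. -/
theorem stmt_7 (a b : ℝ) (u v ux vx ut vt : ℝ → ℝ → ℂ)
    (hbound : ∀ t, Complex.normSq (u 0 t) ≤ 4 * b ^ 2)
    (hux : ∀ x t, HasDerivAt (fun y => u y t) (ux x t) x)
    (hvx : ∀ x t, HasDerivAt (fun y => v y t) (vx x t) x)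
    (hut : ∀ x t, HasDerivAt (fun s => u x s) (ut x t) t)
    (hvt : ∀ x t, HasDerivAt (fun s => v x s) (vt x t) t)
    -- Dirichlet boundary conditions on ũ at x = 0
    (hdir : ∀ t, v 0 t = 0) (hdirt : ∀ t, vt 0 t = 0)
    -- the x-part of the Bäcklund transformation, frozen at x = 0
    (hBTx : ∀ t, ux 0 t - vx 0 t
      = -2 * Complex.I * (a : ℂ) * (u 0 t - v 0 t)
        - (u 0 t + v 0 t)
          * ((Real.sqrt (4 * b ^ 2 - Complex.normSq (u 0 t - v 0 t)) : ℝ) : ℂ))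
    -- the t-part of the Bäcklund transformation, frozen at x = 0
    (hBTt : ∀ t, ut 0 t - vt 0 t
      = 2 * (a : ℂ) * (ux 0 t - vx 0 t)
        - Complex.I * ((Real.sqrt (4 * b ^ 2 - Complex.normSq (u 0 t - v 0 t)) : ℝ) : ℂ)
            * (vx 0 t + ux 0 t)
        + Complex.I * (u 0 t - v 0 t)
            * ((Complex.normSq (u 0 t) : ℂ) + (Complex.normSq (v 0 t) : ℂ))) :
    ∀ t, Complex.I * ut 0 t
        - 2 * ux 0 t * ((Real.sqrt (4 * b ^ 2 - Complex.normSq (u 0 t)) : ℝ) : ℂ)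
        - 4 * ((a : ℂ) ^ 2 + (b : ℂ) ^ 2) * u 0 t
        + 2 * u 0 t * (Complex.normSq (u 0 t) : ℂ) = 0 := by
  intro t
  have hx := hBTx t
  have ht := hBTt t
  simp only [hdir t, hdirt t, sub_zero, add_zero, Complex.normSq_zero, Complex.ofReal_zero] at hx ht
  set Ω : ℂ := ((Real.sqrt (4 * b ^ 2 - Complex.normSq (u 0 t)) : ℝ) : ℂ) with hΩdef
  have hΩ : Ω ^ 2 = (4 * b ^ 2 : ℂ) - (Complex.normSq (u 0 t) : ℂ) := by
    rw [hΩdef, ← Complex.ofReal_pow, Real.sq_sqrt (sub_nonneg.2 (hbound t))]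
    push_cast
    ring
  linear_combination Complex.I * ht + (2 * (a : ℂ) * Complex.I - Ω) * hx + (u 0 t) * hΩ
    - (Ω * (vx 0 t + ux 0 t) - u 0 t * (Complex.normSq (u 0 t) : ℂ)
        + 4 * (a : ℂ) ^ 2 * u 0 t) * Complex.I_sq
end
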